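/- Progress lemma, first form: under the interpolation setup, for 0 < λ ≤ 1, [Γ(v°,ρ_λ) − Γ(v°,ρ₀)] + Γ(v̂_λ, ρ₀) = λ^{-1}⟨v_λ − v₀, ρ_λ − ρ₀⟩ − ⟨v̂_λ − v̂₀, ρ_λ − ρ₀⟩. -/

import Mathlib

/-! A ground-pair equation `Γ(w, ρ) = 0` forces `F(ρ) = E(w) − ⟨w, ρ⟩` to be finite, so at `ρ₀`
and `ρ_λ` all the extended-real arithmetic is real arithmetic. Substituting `F(ρ_λ)` collapses the
left side to `⟨v° − v̂_λ, ρ_λ − ρ₀⟩`, and `v_λ − v₀ = λ (v° − v̂₀)` turns the right side into the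
same pairing. -/

/-- Excess energy `Γ(v,ρ) := F(ρ) + ⟨v,ρ⟩ − E(v)`. -/
noncomputable def Gam {B : Type*} [NormedAddCommGroup B] [NormedSpace ℝ B]
    (F : B → EReal) (E : (B →L[ℝ] ℝ) → ℝ) (v : B →L[ℝ] ℝ) (ρ : B) : EReal :=
  F ρ + (v ρ : EReal) - (E v : EReal)

section Gam

variable {B : Type*} [NormedAddCommGroup B] [NormedSpace ℝ B]
  {F : B → EReal} {E : (B →L[ℝ] ℝ) → ℝ}

theorem Gam_eq_zero_iff {v : B →L[ℝ] ℝ} {ρ : B} :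
    Gam F E v ρ = 0 ↔ F ρ = ((E v - v ρ : ℝ) : EReal) := by
  unfold Gam
  induction F ρ using EReal.rec with
  | bot => simp [-EReal.coe_sub]
  | top => simp [-EReal.coe_sub]
  | coe a =>
    norm_cast
    constructor <;> intro h <;> linarith

theorem Gam_sub_Gam_add_Gam_of_eq_zero {u v w : B →L[ℝ] ℝ} {ρ ρ' : B}
    (hρ : Gam F E u ρ = 0) (hρ' : Gam F E w ρ' = 0) :
    (Gam F E v ρ' - Gam F E v ρ) + Gam F E w ρ = (((v - w) (ρ' - ρ) : ℝ) : EReal) := by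
  rw [Gam_eq_zero_iff] at hρ hρ'
  simp only [Gam, hρ, hρ']
  norm_cast
  simp only [sub_apply, map_sub]
  ring

end Gam

theorem progress_lemma_first_form_general
    {B : Type*} [NormedAddCommGroup B] [NormedSpace ℝ B]
    (F₀ : B → EReal)
    (Φ : B → ℝ)
    (E : (B →L[ℝ] ℝ) → ℝ)
    -- interpolation setup
    (vt v₀ : B →L[ℝ] ℝ) (ρ₀ : B)
    (vhat₀ : B →L[ℝ] ℝ)
    (Δv₀ : B →L[ℝ] ℝ) (hΔv₀ : Δv₀ = vt - vhat₀)
    (v₁ : B →L[ℝ] ℝ) (hv₁ : v₁ = v₀ + Δv₀)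
    (lam : ℝ) (hlam : 0 < lam)
    (vlam : B →L[ℝ] ℝ) (hvlam : vlam = (1 - lam) • v₀ + lam • v₁)
    (ρlam : B)
    (vhatlam : B →L[ℝ] ℝ)
    (hGPhat₀ : Gam (fun σ => F₀ σ + (Φ σ : EReal)) E vhat₀ ρ₀ = 0)
    (hGPhatlam : Gam (fun σ => F₀ σ + (Φ σ : EReal)) E vhatlam ρlam = 0) :
    (Gam (fun σ => F₀ σ + (Φ σ : EReal)) E vt ρlam
        - Gam (fun σ => F₀ σ + (Φ σ : EReal)) E vt ρ₀)
      + Gam (fun σ => F₀ σ + (Φ σ : EReal)) E vhatlam ρ₀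
      = ((lam⁻¹ * ((vlam - v₀) (ρlam - ρ₀))
          - (vhatlam - vhat₀) (ρlam - ρ₀) : ℝ) : EReal) := by
  have hstep : vlam - v₀ = lam • (vt - vhat₀) := by
    rw [hvlam, hv₁, hΔv₀]
    module
  rw [Gam_sub_Gam_add_Gam_of_eq_zero hGPhat₀ hGPhatlam, hstep]
  congr 1
  simp only [smul_apply, sub_apply, smul_eq_mul, inv_mul_cancel_left₀ hlam.ne']
  ring

/-- Progress lemma, first form:
`[Γ(v°,ρ_λ) − Γ(v°,ρ₀)] + Γ(v̂_λ, ρ₀)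
  = λ⁻¹⟨v_λ − v₀, ρ_λ − ρ₀⟩ − ⟨v̂_λ − v̂₀, ρ_λ − ρ₀⟩`. -/
theorem progress_lemma_first_form
    {B : Type*} [NormedAddCommGroup B] [NormedSpace ℝ B]
    (F₀ : B → EReal) (hFbot : ∀ σ : B, F₀ σ ≠ ⊥)
    (E₀ : (B →L[ℝ] ℝ) → ℝ)
    (hE₀ : ∀ v : B →L[ℝ] ℝ, (⨅ σ : B, F₀ σ + (v σ : EReal)) = (E₀ v : EReal))
    (Φ : B → ℝ) (DΦ : B → (B →L[ℝ] ℝ))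
    (hΦ : ∀ ρ σ : B, HasDerivAt (fun t : ℝ => Φ (ρ + t • σ)) (DΦ ρ σ) 0)
    (E : (B →L[ℝ] ℝ) → ℝ)
    (hE : ∀ v : B →L[ℝ] ℝ,
      (⨅ σ : B, (F₀ σ + (Φ σ : EReal)) + (v σ : EReal)) = (E v : EReal))
    -- interpolation setup
    (vt v₀ : B →L[ℝ] ℝ) (ρ₀ : B)
    (hGP₀ : Gam F₀ E₀ v₀ ρ₀ = 0)
    (vhat₀ : B →L[ℝ] ℝ) (hvhat₀ : vhat₀ = v₀ + DΦ ρ₀)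
    (Δv₀ : B →L[ℝ] ℝ) (hΔv₀ : Δv₀ = vt - vhat₀)
    (v₁ : B →L[ℝ] ℝ) (hv₁ : v₁ = v₀ + Δv₀)
    (lam : ℝ) (hlam : 0 < lam) (hlam1 : lam ≤ 1)
    (vlam : B →L[ℝ] ℝ) (hvlam : vlam = (1 - lam) • v₀ + lam • v₁)
    (ρlam : B) (hGP₀lam : Gam F₀ E₀ vlam ρlam = 0)
    (vhatlam : B →L[ℝ] ℝ) (hvhatlam : vhatlam = vlam + DΦ ρlam)
    (hGPhat₀ : Gam (fun σ => F₀ σ + (Φ σ : EReal)) E vhat₀ ρ₀ = 0)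
    (hGPhatlam : Gam (fun σ => F₀ σ + (Φ σ : EReal)) E vhatlam ρlam = 0) :
    (Gam (fun σ => F₀ σ + (Φ σ : EReal)) E vt ρlam
        - Gam (fun σ => F₀ σ + (Φ σ : EReal)) E vt ρ₀)
      + Gam (fun σ => F₀ σ + (Φ σ : EReal)) E vhatlam ρ₀
      = ((lam⁻¹ * ((vlam - v₀) (ρlam - ρ₀))
          - (vhatlam - vhat₀) (ρlam - ρ₀) : ℝ) : EReal) :=
  progress_lemma_first_form_general F₀ Φ E vt v₀ ρ₀ vhat₀ Δv₀ hΔv₀ v₁ hv₁ lam hlam vlam hvlam ρlam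
    vhatlam hGPhat₀ hGPhatlam
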